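/- Let F be a maximum arborescence forest of digraph G, and suppose adding a single arc a to G creates a feasible path P from root r to root r' of F. Then the in-component of r (the set of vertices having a directed path to r) is the same in G and in G + a. -/

import Mathlib

open Finset

variable {V : Type*} [Fintype V] [DecidableEq V]

/-- The in-degree of a vertex `v` in the digraph with arc set `F`. -/
def inDeg (F : Finset (V × V)) (v : V) : ℕ := (F.filter fun a => a.2 = v).card

/-- A root is a vertex of in-degree `0`. -/
def IsRoot (F : Finset (V × V)) (v : V) : Prop := inDeg F v = 0

/-- `F` is acyclic when arc directions are forgotten (no loops, no antiparallel
pairs, and the underlying simple graph is acyclic). -/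
def UndirAcyclic (F : Finset (V × V)) : Prop :=
  (∀ a ∈ F, a.1 ≠ a.2 ∧ (a.2, a.1) ∉ F) ∧
  (SimpleGraph.fromRel fun u v => (u, v) ∈ F).IsAcyclic

/-- An arborescence forest: every vertex has in-degree at most `1`, and the
graph is acyclic ignoring directions. -/
def IsArbForest (F : Finset (V × V)) : Prop :=
  (∀ v, inDeg F v ≤ 1) ∧ UndirAcyclic F

/-- A maximum arborescence forest of `G`: an arborescence forest `F ⊆ G` of
maximum arc cardinality. -/
def IsMaxArbForest (G F : Finset (V × V)) : Prop :=
  F ⊆ G ∧ IsArbForest F ∧ ∀ F' ⊆ G, IsArbForest F' → F'.card ≤ F.card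

/-- Directed reachability in arc set `G`. -/
def Reach (G : Finset (V × V)) (u v : V) : Prop :=
  Relation.ReflTransGen (fun x y => (x, y) ∈ G) u v

/-- Weak reachability: `u` and `v` are in the same weakly connected component. -/
def WReach (F : Finset (V × V)) (u v : V) : Prop :=
  Relation.ReflTransGen (fun x y => (x, y) ∈ F ∨ (y, x) ∈ F) u v

/-- A directed path in `G`, given as its (duplicate-free) list of vertices. -/
def IsDiPath (G : Finset (V × V)) (p : List V) : Prop :=
  p.Chain' (fun u v => (u, v) ∈ G) ∧ p.Nodup

/-- The arcs of a path given as a vertex list. -/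
def pathArcs (p : List V) : Finset (V × V) := (p.zip p.tail).toFinset

/-- `UPDATE(F, P)`: remove the parent arcs (all in-arcs) of every vertex of the
path `p` other than its first vertex, and add the arcs of `p`. -/
def update (F : Finset (V × V)) (p : List V) : Finset (V × V) :=
  (F.filter fun a => a.2 ∉ p.tail) ∪ pathArcs p

/-- A feasible path for `F` from root `r` to root `r'` in `G`: a directed path
`p = p₁ ++ p₂` from `r` to `r'` such that all arcs of `p₁` belong to the
arborescence (weak component) of `r` in `F` and all vertices of `p₂` belong to
the arborescence of `r'` in `F`. -/
def FeasiblePath (G F : Finset (V × V)) (r r' : V) (p : List V) : Prop :=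
  IsDiPath G p ∧ p.head? = some r ∧ p.getLast? = some r' ∧
  ∃ p₁ p₂ : List V, p = p₁ ++ p₂ ∧
    (∀ a ∈ pathArcs p₁, a ∈ F ∧ WReach F r a.1 ∧ WReach F r a.2) ∧
    (∀ v ∈ p₂, WReach F r' v)

/-!
If `a` enlarged the in-component of `r`, then `a.2` would already reach `r` in `G`. A maximum
arborescence forest admits no directed path in `G` from one of its roots to another: walking along
such a path from the root `ρ`, every vertex outside the current tree of `ρ` can be cut from its
parent and hung below its predecessor without losing an arc, and the first root met this way can
be attached with a gain of one arc. Now if `a` is not an arc of `P`, then `P` is a path of `G`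
from `r` to `r'`. Otherwise `a` cannot lie in the `F`-part of `P`, so `a.2` lies in the tree of
`r'`; then `r'` reaches `a.2` in `F`, hence `r` in `G`.
-/

open Relation

section Digraph

variable {α : Type*} {F G H : Finset (α × α)} {u v w x y ρ ρ' : α}

lemma Reach.mono (hGH : G ⊆ H) (h : Reach G u v) : Reach H u v :=
  ReflTransGen.mono (fun _ _ hab => hGH hab) _ _ h

lemma reach_insert [DecidableEq α] {a : α × α} (h : Reach (insert a H) u v) :
    Reach H u v ∨ Reach H u a.1 ∧ Reach H a.2 v := by
  induction h using ReflTransGen.head_induction_on with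
  | refl => exact Or.inl .refl
  | @head u w huw _ ih =>
    rcases mem_insert.mp huw with rfl | huw
    · exact Or.inr ⟨.refl, ih.elim id And.right⟩
    · exact ih.imp (.head huw) (And.imp_left (.head huw))

lemma isRoot_iff [DecidableEq α] : IsRoot F v ↔ ∀ u, (u, v) ∉ F := by
  simp only [IsRoot, inDeg, card_eq_zero, filter_eq_empty_iff, Prod.forall]
  exact ⟨fun h u hu => h u v hu rfl, fun h u _ hu hv => h u (hv ▸ hu)⟩

lemma inDeg_le_one_iff [DecidableEq α] :
    inDeg F v ≤ 1 ↔ ∀ u w, (u, v) ∈ F → (w, v) ∈ F → u = w := by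
  rw [inDeg, card_le_one]
  constructor
  · intro h u w hu hw
    exact congrArg Prod.fst (h _ (mem_filter.mpr ⟨hu, rfl⟩) _ (mem_filter.mpr ⟨hw, rfl⟩))
  · rintro h ⟨u, v₁⟩ hu ⟨w, v₂⟩ hw
    simp only [mem_filter] at hu hw
    obtain ⟨hu, rfl⟩ := hu
    obtain ⟨hw, rfl⟩ := hw
    rw [h u w hu hw]

lemma IsRoot.eq_of_reach [DecidableEq α] (hv : IsRoot F v) (h : Reach F u v) : u = v := by
  rcases ReflTransGen.cases_tail h with rfl | ⟨w, -, hwv⟩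
  · rfl
  · exact absurd hwv (isRoot_iff.mp hv w)

lemma IsRoot.reach_of_wReach [DecidableEq α] (hdeg : ∀ v, inDeg F v ≤ 1) (hρ : IsRoot F ρ)
    (h : WReach F ρ v) : Reach F ρ v := by
  induction h with
  | refl => exact .refl
  | tail _ hvw ih =>
    rcases hvw with hvw | hwv
    · exact ReflTransGen.tail ih hvw
    · rcases ReflTransGen.cases_tail ih with rfl | ⟨u, hu, huv⟩
      · exact absurd hwv (isRoot_iff.mp hρ _)
      · rwa [inDeg_le_one_iff.mp (hdeg _) _ _ huv hwv] at hu

lemma reach_or_reach_of_reach [DecidableEq α] (hdeg : ∀ v, inDeg F v ≤ 1)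
    (hu : Reach F u x) (hw : Reach F w x) : Reach F u w ∨ Reach F w u := by
  induction hu with
  | refl => exact Or.inr hw
  | @tail c x huc hcx ih =>
    rcases ReflTransGen.cases_tail hw with rfl | ⟨d, hwd, hdx⟩
    · exact Or.inl (ReflTransGen.tail huc hcx)
    · exact ih (inDeg_le_one_iff.mp (hdeg x) _ _ hdx hcx ▸ hwd)

def DirAcyclic (H : Finset (α × α)) : Prop :=
  ∀ ⦃u v⦄, (u, v) ∈ H → ¬Reach H v u

lemma DirAcyclic.mono (hGH : G ⊆ H) (hH : DirAcyclic H) : DirAcyclic G :=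
  fun _ _ huv hvu => hH (hGH huv) (hvu.mono hGH)

lemma DirAcyclic.insert [DecidableEq α] (hH : DirAcyclic H) (hyx : ¬Reach H y x) :
    DirAcyclic (insert (x, y) H) := by
  intro u v huv hvu
  rcases mem_insert.mp huv with huv | huv
  · obtain ⟨rfl, rfl⟩ := Prod.mk.inj huv
    exact hyx ((reach_insert hvu).elim id And.left)
  · rcases reach_insert hvu with hvu | ⟨hvx, hyu⟩
    · exact hH huv hvu
    · exact hyx ((ReflTransGen.tail hyu huv).trans hvx)

lemma ncard_ancestors_lt [Finite α] (hH : DirAcyclic H) (huv : (u, v) ∈ H) :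
    {w | Reach H w u}.ncard < {w | Reach H w v}.ncard :=
  Set.ncard_lt_ncard ⟨fun _ hw => ReflTransGen.tail hw huv,
    fun h => hH huv (h (show v ∈ {w | Reach H w v} from .refl))⟩

lemma IsArbForest.dirAcyclic [DecidableEq α] (hF : IsArbForest F) : DirAcyclic F := by
  intro u v huv hvu
  obtain ⟨hne, hanti⟩ := hF.2.1 _ huv
  have hvu' : Reach (F.erase (u, v)) v u := by
    rw [← insert_erase huv] at hvu
    exact (reach_insert hvu).elim id And.left
  refine SimpleGraph.isBridge_iff.mp (SimpleGraph.isAcyclic_iff_forall_adj_isBridge.mp hF.2.2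
    ((SimpleGraph.fromRel_adj _ _ _).mpr ⟨hne, Or.inl huv⟩)) ?_
  refine ((SimpleGraph.reachable_iff_reflTransGen _ _).mpr
    (ReflTransGen.mono (fun a b hab => ?_) _ _ hvu')).symm
  obtain ⟨hab, habF⟩ := mem_erase.mp hab
  refine SimpleGraph.deleteEdges_adj.mpr
    ⟨(SimpleGraph.fromRel_adj _ _ _).mpr ⟨(hF.2.1 _ habF).1, Or.inl habF⟩, ?_⟩
  rw [Set.mem_singleton_iff, Sym2.eq_iff]
  rintro (⟨rfl, rfl⟩ | ⟨rfl, rfl⟩)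
  · exact hab rfl
  · exact hanti habF

/-- The potential is the number of ancestors: it increases along arcs, so at its maximum on an
undirected cycle both cycle neighbours are parents. -/
lemma isArbForest_of_dirAcyclic [DecidableEq α] [Finite α] (hdeg : ∀ v, inDeg H v ≤ 1)
    (hH : DirAcyclic H) : IsArbForest H := by
  refine ⟨hdeg, fun c hc => ⟨fun h => hH hc (h ▸ .refl), fun h => hH hc (.single h)⟩, ?_⟩
  intro x c hc
  obtain ⟨m, hm, hmax⟩ := c.support.toFinset.exists_max_image
    (fun v => {w | Reach H w v}.ncard) ⟨x, by simp⟩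
  have hm : m ∈ c.support := List.mem_toFinset.mp hm
  have hc' := hc.rotate hm
  have parent : ∀ n ∈ (c.rotate m hm).support,
      (SimpleGraph.fromRel fun u v => (u, v) ∈ H).Adj m n → (n, m) ∈ H := by
    intro n hn hadj
    refine ((SimpleGraph.fromRel_adj _ _ _).mp hadj).2.resolve_left fun hmn => ?_
    have := hmax n (List.mem_toFinset.mpr ((c.mem_support_rotate_iff m hm).mp hn))
    exact (ncard_ancestors_lt hH hmn).not_ge this
  exact hc'.snd_ne_penultimate (inDeg_le_one_iff.mp (hdeg m) _ _
    (parent _ (SimpleGraph.Walk.getVert_mem_support _ _) (SimpleGraph.Walk.adj_snd hc'.not_nil))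
    (parent _ (SimpleGraph.Walk.getVert_mem_support _ _)
      (SimpleGraph.Walk.adj_penultimate hc'.not_nil).symm))

lemma isArbForest_iff [DecidableEq α] [Finite α] :
    IsArbForest F ↔ (∀ v, inDeg F v ≤ 1) ∧ DirAcyclic F :=
  ⟨fun hF => ⟨hF.1, hF.dirAcyclic⟩, fun hF => isArbForest_of_dirAcyclic hF.1 hF.2⟩

section Regraft

variable [DecidableEq α]

def regraft (F : Finset (α × α)) (x y : α) : Finset (α × α) :=
  insert (x, y) (F.filter fun c => c.2 ≠ y)

lemma mem_regraft {c : α × α} :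
    c ∈ regraft F x y ↔ c = (x, y) ∨ c ∈ F ∧ c.2 ≠ y := by
  simp [regraft]

lemma regraft_subset (hFG : F ⊆ G) (hxy : (x, y) ∈ G) : regraft F x y ⊆ G :=
  insert_subset hxy ((filter_subset _ _).trans hFG)

lemma card_regraft_add_inDeg : (regraft F x y).card + inDeg F y = F.card + 1 := by
  rw [regraft, card_insert_of_notMem (by simp), inDeg, add_right_comm, add_comm (#_)]
  exact congrArg (· + 1) (card_filter_add_card_filter_not _)

lemma inDeg_regraft_le_one (hdeg : ∀ v, inDeg F v ≤ 1) (v : α) :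
    inDeg (regraft F x y) v ≤ 1 := by
  refine inDeg_le_one_iff.mpr fun u w hu hw => ?_
  rw [mem_regraft] at hu hw
  by_cases hv : v = y
  · exact (Prod.mk.inj (hu.resolve_right fun h => h.2 hv)).1.trans
      (Prod.mk.inj (hw.resolve_right fun h => h.2 hv)).1.symm
  · have hne : ∀ {z}, (z, v) ≠ (x, y) := fun h => hv (congrArg Prod.snd h)
    exact inDeg_le_one_iff.mp (hdeg v) u w (hu.resolve_left hne).1 (hw.resolve_left hne).1

lemma isRoot_regraft (hv : IsRoot F v) (hvy : v ≠ y) : IsRoot (regraft F x y) v :=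
  isRoot_iff.mpr fun u hu =>
    isRoot_iff.mp hv u ((mem_regraft.mp hu).resolve_left fun h => hvy (congrArg Prod.snd h)).1

lemma reach_regraft (hρx : Reach F ρ x) (hρy : ¬Reach F ρ y) : Reach (regraft F x y) ρ y := by
  refine ReflTransGen.tail (Reach.mono (subset_insert _ _) ?_)
    (mem_insert_self _ _)
  induction hρx with
  | refl => exact .refl
  | @tail b c hρb hbc ih =>
    refine ReflTransGen.tail ih (mem_filter.mpr ⟨hbc, ?_⟩)
    rintro rfl
    exact hρy (ReflTransGen.tail hρb hbc)

lemma IsArbForest.regraft [Finite α] (hF : IsArbForest F) (hyx : ¬Reach F y x) :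
    IsArbForest (regraft F x y) :=
  isArbForest_iff.mpr ⟨inDeg_regraft_le_one hF.1,
    (hF.dirAcyclic.mono (filter_subset _ _)).insert
      fun h => hyx (h.mono (filter_subset _ _))⟩

end Regraft

lemma exists_card_lt_of_reach [DecidableEq α] [Finite α] (hFG : F ⊆ G) (hF : IsArbForest F)
    (hρ : IsRoot F ρ) (hρ' : IsRoot F ρ') (hne : ρ ≠ ρ') (hρx : Reach F ρ x)
    (hxρ' : Reach G x ρ') : ∃ F' ⊆ G, IsArbForest F' ∧ F.card < F'.card := by
  induction hxρ' using ReflTransGen.head_induction_on generalizing F with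
  | refl => exact absurd (hρ'.eq_of_reach hρx) hne
  | @head x y hxy _ ih =>
    by_cases hρy : Reach F ρ y
    · exact ih hFG hF hρ hρ' hρy
    have hρy' : ρ ≠ y := fun h => hρy (h ▸ ReflTransGen.refl)
    have hyx : ¬Reach F y x := fun hyx =>
      (reach_or_reach_of_reach hF.1 hρx hyx).elim hρy
        fun hyρ => hρy' (hρ.eq_of_reach hyρ).symm
    have hcard : (regraft F x y).card + inDeg F y = F.card + 1 := card_regraft_add_inDeg
    by_cases hy : IsRoot F y
    · exact ⟨_, regraft_subset hFG hxy, hF.regraft hyx, by rw [IsRoot] at hy; omega⟩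
    · obtain ⟨F', hF'G, hF', hlt⟩ := ih (regraft_subset hFG hxy) (hF.regraft hyx)
        (isRoot_regraft hρ hρy') (isRoot_regraft hρ' fun h => hy (h ▸ hρ'))
        (reach_regraft hρx hρy)
      exact ⟨F', hF'G, hF', by have := hF.1 y; omega⟩

lemma IsMaxArbForest.not_reach_of_isRoot [DecidableEq α] [Finite α] (hF : IsMaxArbForest G F)
    (hρ : IsRoot F ρ) (hρ' : IsRoot F ρ') (hne : ρ ≠ ρ') : ¬Reach G ρ ρ' := fun h => by
  obtain ⟨F', hF'G, hF', hlt⟩ := exists_card_lt_of_reach hF.1 hF.2.1 hρ hρ' hne .refl h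
  exact (hF.2.2 F' hF'G hF').not_gt hlt

lemma pathArcs_cons_cons [DecidableEq α] (x y : α) (l : List α) :
    pathArcs (x :: y :: l) = insert (x, y) (pathArcs (y :: l)) := by
  simp [pathArcs]

lemma isChain_iff_pathArcs_subset [DecidableEq α] {p : List α} :
    p.IsChain (fun u v => (u, v) ∈ G) ↔ pathArcs p ⊆ G := by
  induction p with
  | nil => simp [pathArcs]
  | cons x l ih =>
    cases l with
    | nil => simp [pathArcs]
    | cons y l => rw [List.isChain_cons_cons, pathArcs_cons_cons, insert_subset_iff, ih]

lemma snd_mem_tail_of_mem_pathArcs [DecidableEq α] {p : List α} {c : α × α}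
    (h : c ∈ pathArcs p) : c.2 ∈ p.tail :=
  (List.of_mem_zip (List.mem_toFinset.mp h)).2

lemma mem_pathArcs_append [DecidableEq α] {p₁ p₂ : List α} {c : α × α}
    (h : c ∈ pathArcs (p₁ ++ p₂)) : c ∈ pathArcs p₁ ∨ c.2 ∈ p₂ := by
  induction p₁ with
  | nil => exact Or.inr (List.mem_of_mem_tail (snd_mem_tail_of_mem_pathArcs h))
  | cons x l ih =>
    cases l with
    | nil => exact Or.inr (snd_mem_tail_of_mem_pathArcs h)
    | cons y l =>
      rw [List.cons_append, List.cons_append, pathArcs_cons_cons, mem_insert] at h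
      rw [pathArcs_cons_cons, mem_insert]
      exact h.elim (fun h => Or.inl (Or.inl h)) fun h => (ih h).imp_left Or.inr

lemma reach_of_isChain {p : List α} (hp : p.IsChain (fun u v => (u, v) ∈ G))
    (hu : p.head? = some u) (hv : p.getLast? = some v) : Reach G u v := by
  obtain ⟨l, rfl⟩ := List.head?_eq_some_iff.mp hu
  exact List.relationReflTransGen_of_exists_isChain_cons l hp
    (Option.some.inj ((List.getLast?_eq_some_getLast _).symm.trans hv))

end Digraph

/-- If adding a single arc `a` to `G` creates a feasible path from root `r` to
root `r'` of a maximum arborescence forest `F` of `G`, then the in-component of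
`r` is the same in `G` and in `G + a`. -/
theorem stmt4 (G F : Finset (V × V)) (a : V × V) (r r' : V) (p : List V)
    (hF : IsMaxArbForest G F) (ha : a ∉ G) (hrr : r ≠ r')
    (hr : IsRoot F r) (hr' : IsRoot F r')
    (hp : FeasiblePath (insert a G) F r r' p) :
    ∀ v : V, Reach G v r ↔ Reach (insert a G) v r := by
  obtain ⟨⟨hpG, -⟩, hph, hpl, p₁, p₂, rfl, hp₁, hp₂⟩ := hp
  have ha_r : ¬Reach G a.2 r := by
    intro har
    have ha_arcs : a ∉ pathArcs (p₁ ++ p₂) := fun hap =>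
      (mem_pathArcs_append hap).elim (fun h => ha (hF.1 (hp₁ a h).1)) fun h =>
        hF.not_reach_of_isRoot hr' hr hrr.symm
          (((hr'.reach_of_wReach hF.2.1.1 (hp₂ _ h)).mono hF.1).trans har)
    have hpG' : pathArcs (p₁ ++ p₂) ⊆ G := fun c hc =>
      (mem_insert.mp (isChain_iff_pathArcs_subset.mp hpG hc)).resolve_left
        (by rintro rfl; exact ha_arcs hc)
    exact hF.not_reach_of_isRoot hr hr' hrr
      (reach_of_isChain (isChain_iff_pathArcs_subset.mpr hpG') hph hpl)
  intro v
  exact ⟨Reach.mono (subset_insert a G),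
    fun h => (reach_insert h).resolve_right fun h' => ha_r h'.2⟩
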